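/- arXiv:2604.22019 — 4 statements merged into one kernel-verified Lean document; each statement's English description precedes it below -/
import Mathlib

section
/- Let X be a nonempty compact metric space and let F ⊆ X × X be a closed relation with X_F^+ nonempty. Then the shift map σ_F^+ : X_F^+ → X_F^+ has the specification property if and only if X_F^+ has the CR-specification property. -/
open Set Filter Topology

/-- One-sided Mahavier product of a relation `F` on `X`. -/
def MahavierPlus {X : Type*} (F : Set (X × X)) : Set (ℕ → X) :=
  {x | ∀ n : ℕ, (x n, x (n + 1)) ∈ F}

/-- Two-sided Mahavier product of a relation `F` on `X`. -/
def MahavierTwo {X : Type*} (F : Set (X × X)) : Set (ℤ → X) :=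
  {x | ∀ n : ℤ, (x n, x (n + 1)) ∈ F}

/-- The shift map on the one-sided Mahavier product. -/
def shiftPlus {X : Type*} (F : Set (X × X)) (x : MahavierPlus F) : MahavierPlus F :=
  ⟨fun n => (x : ℕ → X) (n + 1), fun n => x.2 (n + 1)⟩

/-- The shift map on the two-sided Mahavier product. -/
def shiftTwo {X : Type*} (F : Set (X × X)) (x : MahavierTwo F) : MahavierTwo F :=
  ⟨fun n => (x : ℤ → X) (n + 1), fun n => x.2 (n + 1)⟩

/-- The metric `D(x,y) = sup_{n ≥ 1} d(x_n, y_n)/2^n` on one-sided sequences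
(coordinates are indexed from `0` here, so the weight is `2^(n+1)`). -/
noncomputable def DPlus {X : Type*} [PseudoMetricSpace X] (x y : ℕ → X) : ℝ :=
  ⨆ n : ℕ, dist (x n) (y n) / 2 ^ (n + 1)

/-- The metric `D(x,y) = sup_{n ∈ ℤ} d(x_n, y_n)/2^{|n|}` on two-sided sequences. -/
noncomputable def DTwo {X : Type*} [PseudoMetricSpace X] (x y : ℤ → X) : ℝ :=
  ⨆ n : ℤ, dist (x n) (y n) / 2 ^ n.natAbs

/-- Topological transitivity. -/
def TopTransitive {Y : Type*} [TopologicalSpace Y] (f : Y → Y) : Prop :=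
  ∀ U V : Set Y, IsOpen U → IsOpen V → U.Nonempty → V.Nonempty →
    ∃ n : ℕ, (f^[n] '' U ∩ V).Nonempty

/-- Topological mixing. -/
def TopMixing {Y : Type*} [TopologicalSpace Y] (f : Y → Y) : Prop :=
  ∀ U V : Set Y, IsOpen U → IsOpen V → U.Nonempty → V.Nonempty →
    ∃ n₀ : ℕ, ∀ n : ℕ, n₀ ≤ n → (f^[n] '' U ∩ V).Nonempty

/-- The shadowing property for a map `f` with respect to a distance `dY`. -/
def ShadowingProp {Y : Type*} (dY : Y → Y → ℝ) (f : Y → Y) : Prop :=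
  ∀ ε : ℝ, 0 < ε → ∃ δ : ℝ, 0 < δ ∧ ∀ x : ℕ → Y,
    (∀ k : ℕ, dY (f (x k)) (x (k + 1)) < δ) →
    ∃ y : Y, ∀ k : ℕ, dY (f^[k] y) (x k) < ε

/-- The specification property for a map `f` with respect to a distance `dY`. -/
def SpecProp {Y : Type*} (dY : Y → Y → ℝ) (f : Y → Y) : Prop :=
  ∀ ε : ℝ, 0 < ε → ∃ N : ℕ, 0 < N ∧ ∀ n : ℕ, 0 < n →
    ∀ x : Fin n → Y, ∀ k l : Fin n → ℕ,
      (∀ i, k i ≤ l i) →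
      (∀ i j : Fin n, (i : ℕ) + 1 = (j : ℕ) → l i + N ≤ k j) →
      ∃ y : Y, ∀ i : Fin n, ∀ m : ℕ, k i ≤ m → m ≤ l i →
        dY (f^[m] y) (f^[m] (x i)) ≤ ε

/-- The CR-specification property for the one-sided Mahavier product of `F`. -/
def CRSpec {X : Type*} [PseudoMetricSpace X] (F : Set (X × X)) : Prop :=
  ∀ ε : ℝ, 0 < ε → ∃ N : ℕ, 0 < N ∧ ∀ n : ℕ, 0 < n →
    ∀ x : Fin n → MahavierPlus F, ∀ k l : Fin n → ℕ,
      (∀ i, k i ≤ l i) →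
      (∀ i j : Fin n, (i : ℕ) + 1 = (j : ℕ) → l i + N ≤ k j) →
      ∃ y : MahavierPlus F, ∀ i : Fin n, ∀ m : ℕ, k i ≤ m → m ≤ l i →
        dist ((x i : ℕ → X) m) ((y : ℕ → X) m) ≤ ε

/-- The image of a set under a relation. -/
def relImage {X : Type*} (F : Set (X × X)) (A : Set X) : Set X :=
  {y | ∃ a ∈ A, (a, y) ∈ F}

/-- Composition of relations. -/
def relComp {X : Type*} (F G : Set (X × X)) : Set (X × X) :=
  {p | ∃ z : X, (p.1, z) ∈ F ∧ (z, p.2) ∈ G}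

/-- Iterated composition `F^n` of a relation with itself. -/
def relPow {X : Type*} (F : Set (X × X)) : ℕ → Set (X × X)
  | 0 => {p | p.1 = p.2}
  | n + 1 => relComp (relPow F n) F

/-!
Since `(σ^m x)_p = x_{m+p}`, the `D`-distance of `σ^m x` and `σ^m y` is at least half the distance
of the coordinates `x_m, y_m`, so specification for `ε / 2` gives CR-specification for `ε`.
Conversely, `D(x, y) ≤ ε` as soon as `x_p, y_p` are `ε`-close for `p < M`, where `ε 2^M ≥ diam X`
(later coordinates are damped below `ε` anyway); so CR-specification applied on the orbit
segments lengthened by `M`, with gap `N + M`, gives specification.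
-/

open Metric

section DPlus

variable {X : Type*} [PseudoMetricSpace X]

lemma DPlus_le {x y : ℕ → X} {ε : ℝ} (hε : 0 ≤ ε)
    (h : ∀ n, dist (x n) (y n) / 2 ^ (n + 1) ≤ ε) : DPlus x y ≤ ε :=
  Real.iSup_le h hε

variable [BoundedSpace X]

lemma dist_le_diam_univ (a b : X) : dist a b ≤ diam (univ : Set X) :=
  dist_le_diam_of_mem BoundedSpace.bounded_univ (mem_univ a) (mem_univ b)

lemma dist_div_two_pow_le_DPlus (x y : ℕ → X) (n : ℕ) :
    dist (x n) (y n) / 2 ^ (n + 1) ≤ DPlus x y := by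
  refine le_ciSup (f := fun p => dist (x p) (y p) / 2 ^ (p + 1)) ⟨diam (univ : Set X), ?_⟩ n
  rintro _ ⟨p, rfl⟩
  exact (div_le_self dist_nonneg (one_le_pow₀ one_le_two)).trans (dist_le_diam_univ _ _)

lemma dist_zero_le_two_mul_DPlus (x y : ℕ → X) : dist (x 0) (y 0) ≤ 2 * DPlus x y := by
  have := dist_div_two_pow_le_DPlus x y 0
  rw [zero_add, pow_one] at this
  linarith

lemma DPlus_le_of_dist_le {x y : ℕ → X} {ε : ℝ} {M : ℕ} (hε : 0 ≤ ε)
    (hM : diam (univ : Set X) ≤ ε * 2 ^ M) (h : ∀ p < M, dist (x p) (y p) ≤ ε) :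
    DPlus x y ≤ ε := by
  refine DPlus_le hε fun p => ?_
  rcases lt_or_ge p M with hp | hp
  · exact (div_le_div_of_nonneg_right (h p hp) (by positivity)).trans
      (div_le_self hε (one_le_pow₀ one_le_two))
  · rw [div_le_iff₀ (by positivity)]
    calc dist (x p) (y p) ≤ diam univ := dist_le_diam_univ _ _
      _ ≤ ε * 2 ^ M := hM
      _ ≤ ε * 2 ^ (p + 1) := by gcongr <;> [norm_num; omega]

end DPlus

lemma shiftPlus_iterate_apply {X : Type*} {F : Set (X × X)} (y : MahavierPlus F) (m n : ℕ) :
    (((shiftPlus F)^[m] y : MahavierPlus F) : ℕ → X) n = (y : ℕ → X) (n + m) := by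
  induction m generalizing y with
  | zero => rfl
  | succ m ih =>
    rw [Function.iterate_succ_apply, ih]
    exact congrArg (y : ℕ → X) (by omega)

section Specification

variable {X : Type*} [PseudoMetricSpace X] [BoundedSpace X] {F : Set (X × X)}

lemma CRSpec_of_specProp
    (hspec : SpecProp (fun a b : MahavierPlus F => DPlus (a : ℕ → X) b) (shiftPlus F)) :
    CRSpec F := by
  intro ε hε
  obtain ⟨N, hN, hspecN⟩ := hspec (ε / 2) (by positivity)
  refine ⟨N, hN, fun n hn x k l hkl hgap => ?_⟩
  obtain ⟨y, hy⟩ := hspecN n hn x k l hkl hgap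
  refine ⟨y, fun i m hkm hml => ?_⟩
  have hm := dist_zero_le_two_mul_DPlus (((shiftPlus F)^[m] y : MahavierPlus F) : ℕ → X)
    ((shiftPlus F)^[m] (x i))
  simp only [shiftPlus_iterate_apply, zero_add] at hm
  rw [dist_comm]
  linarith [hy i m hkm hml]

lemma specProp_of_CRSpec (hcr : CRSpec F) :
    SpecProp (fun a b : MahavierPlus F => DPlus (a : ℕ → X) b) (shiftPlus F) := by
  intro ε hε
  obtain ⟨M, hM⟩ := pow_unbounded_of_one_lt (diam (univ : Set X) / ε) one_lt_two
  obtain ⟨N, hN, hcrN⟩ := hcr ε hε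
  refine ⟨N + M, by omega, fun n hn x k l hkl hgap => ?_⟩
  obtain ⟨y, hy⟩ := hcrN n hn x k (fun i => l i + M)
    (fun i => (hkl i).trans (Nat.le_add_right _ _)) (fun i j hij => by have := hgap i j hij; omega)
  refine ⟨y, fun i m hkm hml => DPlus_le_of_dist_le (M := M) hε.le ?_ fun p hp => ?_⟩
  · rw [div_lt_iff₀ hε] at hM
    linarith
  · simp only [shiftPlus_iterate_apply]
    rw [dist_comm]
    exact hy i (p + m) (by omega) (by omega)

end Specification

theorem stmt0_general {X : Type*} [MetricSpace X] [CompactSpace X]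
    (F : Set (X × X)) :
    SpecProp (fun a b : MahavierPlus F => DPlus (a : ℕ → X) (b : ℕ → X)) (shiftPlus F) ↔
      CRSpec F :=
  ⟨CRSpec_of_specProp, specProp_of_CRSpec⟩

/-- For a closed relation `F` on a nonempty compact metric space `X`
with nonempty one-sided Mahavier product, the shift map has the specification property
iff `X_F^+` has the CR-specification property. -/
theorem stmt0 {X : Type*} [MetricSpace X] [CompactSpace X] [Nonempty X]
    (F : Set (X × X)) (hF : IsClosed F) (hne : (MahavierPlus F).Nonempty) :
    SpecProp (fun a b : MahavierPlus F => DPlus (a : ℕ → X) (b : ℕ → X)) (shiftPlus F) ↔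
      CRSpec F :=
  stmt0_general F
end

section
/- Neither the one-sided Mahavier dynamical system (I_{F_{1/2,3}}^+, σ^+_{F_{1/2,3}}) nor the two-sided Mahavier dynamical system (I_{F_{1/2,3}}, σ_{F_{1/2,3}}) is topologically mixing. -/
open Set Filter Topology

/-- The relation `F_{1/2,3} = {(x,3x) : 0 ≤ x ≤ 1/3} ∪ {(x,x/2) : 0 ≤ x ≤ 1}` on `I = [0,1]`. -/
def F23 : Set (ℝ × ℝ) :=
  {p | (p.1 ∈ Set.Icc (0 : ℝ) (1 / 3) ∧ p.2 = 3 * p.1) ∨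
       (p.1 ∈ Set.Icc (0 : ℝ) 1 ∧ p.2 = p.1 / 2)}

lemma F23_fst {p : ℝ × ℝ} (hp : p ∈ F23) : 0 ≤ p.1 ∧ p.1 ≤ 1 := by
  rcases hp with ⟨⟨h1, h2⟩, _⟩ | ⟨⟨h1, h2⟩, _⟩ <;> constructor <;> linarith

lemma F23_step {p : ℝ × ℝ} (hp : p ∈ F23) : p.2 = 3 * p.1 ∨ p.2 = p.1 / 2 := by
  rcases hp with ⟨_, h⟩ | ⟨_, h⟩
  · exact Or.inl h
  · exact Or.inr h

/-- Multiplicative rigidity of orbits, one-sided. -/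
lemma orbitPlus {x : ℕ → ℝ} (hx : x ∈ MahavierPlus F23) (n : ℕ) :
    ∃ a : ℕ, x n * 2 ^ n = x 0 * 6 ^ a := by
  induction n with
  | zero => exact ⟨0, by simp⟩
  | succ n ih =>
    obtain ⟨a, ha⟩ := ih
    rcases F23_step (hx n) with h | h
    · refine ⟨a + 1, ?_⟩
      replace h : x (n + 1) = 3 * x n := h
      have : x (n + 1) * 2 ^ (n + 1) = 6 * (x n * 2 ^ n) := by rw [h]; ring
      rw [this, ha]; ring
    · refine ⟨a, ?_⟩
      replace h : x (n + 1) = x n / 2 := h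
      have : x (n + 1) * 2 ^ (n + 1) = x n * 2 ^ n := by rw [h]; ring
      rw [this, ha]

/-- Multiplicative rigidity of orbits, two-sided. -/
lemma orbitTwo {x : ℤ → ℝ} (hx : x ∈ MahavierTwo F23) (n : ℕ) :
    ∃ a : ℕ, x (n : ℤ) * 2 ^ n = x 0 * 6 ^ a := by
  induction n with
  | zero => exact ⟨0, by simp⟩
  | succ n ih =>
    obtain ⟨a, ha⟩ := ih
    have hcast : ((n : ℤ) + 1) = ((n + 1 : ℕ) : ℤ) := by push_cast; ring
    rcases F23_step (hx (n : ℤ)) with h | h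
    · refine ⟨a + 1, ?_⟩
      replace h : x ((n : ℤ) + 1) = 3 * x (n : ℤ) := h
      rw [hcast] at h
      have : x ((n + 1 : ℕ) : ℤ) * 2 ^ (n + 1) = 6 * (x (n : ℤ) * 2 ^ n) := by rw [h]; ring
      rw [this, ha]; ring
    · refine ⟨a, ?_⟩
      replace h : x ((n : ℤ) + 1) = x (n : ℤ) / 2 := h
      rw [hcast] at h
      have : x ((n + 1 : ℕ) : ℤ) * 2 ^ (n + 1) = x (n : ℤ) * 2 ^ n := by rw [h]; ring
      rw [this, ha]

lemma iterPlus (x : MahavierPlus F23) (n k : ℕ) :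
    ((shiftPlus F23)^[n] x : ℕ → ℝ) k = (x : ℕ → ℝ) (k + n) := by
  induction n generalizing k with
  | zero => simp
  | succ n ih =>
    rw [Function.iterate_succ_apply']
    show ((shiftPlus F23)^[n] x : ℕ → ℝ) (k + 1) = (x : ℕ → ℝ) (k + (n + 1))
    rw [ih (k + 1)]
    ring_nf

lemma iterTwo (x : MahavierTwo F23) (n : ℕ) (k : ℤ) :
    ((shiftTwo F23)^[n] x : ℤ → ℝ) k = (x : ℤ → ℝ) (k + n) := by
  induction n generalizing k with
  | zero => simp
  | succ n ih =>
    rw [Function.iterate_succ_apply']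
    show ((shiftTwo F23)^[n] x : ℤ → ℝ) (k + 1) = (x : ℤ → ℝ) (k + ((n : ℤ) + 1))
    rw [ih (k + 1)]
    ring_nf

/-- If both endpoints of a length-`n` orbit segment lie in `(0.9, 1]`,
then the ratio `6^a / 2^n` lies in `(9/10, 10/9)`. -/
lemma bridge {n a : ℕ} {u v : ℝ} (hu : 0.9 < u) (hu1 : u ≤ 1)
    (hv : 0.9 < v) (hv1 : v ≤ 1) (heq : v * 2 ^ n = u * 6 ^ a) :
    (9 : ℝ) * 2 ^ n < 10 * 6 ^ a ∧ (9 : ℝ) * 6 ^ a < 10 * 2 ^ n := by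
  have h2 : (0 : ℝ) < 2 ^ n := by positivity
  have h6 : (0 : ℝ) < 6 ^ a := by positivity
  constructor
  · nlinarith
  · nlinarith

/-- The key arithmetic fact: `6^a/2^n` and `6^b/2^(n+1)` cannot both
lie in `(9/10, 10/9)`. -/
lemma keyArith {n a b : ℕ}
    (h1 : (9 : ℝ) * 2 ^ n < 10 * 6 ^ a) (h2 : (9 : ℝ) * 6 ^ a < 10 * 2 ^ n)
    (h3 : (9 : ℝ) * 2 ^ (n + 1) < 10 * 6 ^ b)
    (h4 : (9 : ℝ) * 6 ^ b < 10 * 2 ^ (n + 1)) : False := by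
  have h2n : (0 : ℝ) < 2 ^ n := by positivity
  have hpow : (2 : ℝ) ^ (n + 1) = 2 * 2 ^ n := by ring
  rw [hpow] at h3 h4
  rcases le_or_gt b a with hba | hab
  · have : (6 : ℝ) ^ b ≤ 6 ^ a := pow_le_pow_right₀ (by norm_num) hba
    nlinarith
  · have : (6 : ℝ) ^ (a + 1) ≤ 6 ^ b := pow_le_pow_right₀ (by norm_num) hab
    have h6 : (6 : ℝ) ^ (a + 1) = 6 * 6 ^ a := by ring
    nlinarith

/-- Neither the one-sided nor the two-sided Mahavier system of
`F_{1/2,3}` is topologically mixing. -/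
theorem stmt2 :
    ¬ TopMixing (shiftPlus F23) ∧ ¬ TopMixing (shiftTwo F23) := by
  constructor
  · intro h
    set U : Set (MahavierPlus F23) := {x | (0.9 : ℝ) < (x : ℕ → ℝ) 0} with hU
    have hUopen : IsOpen U :=
      isOpen_lt continuous_const ((continuous_apply 0).comp continuous_subtype_val)
    have hmem : (fun n : ℕ => (1 / 2 : ℝ) ^ n) ∈ MahavierPlus F23 := by
      intro n
      refine Or.inr ⟨⟨by positivity, ?_⟩, by ring⟩
      exact pow_le_one₀ (by norm_num) (by norm_num)
    have hUne : U.Nonempty := ⟨⟨_, hmem⟩, by simp [hU]; norm_num⟩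
    obtain ⟨n₀, hn₀⟩ := h U U hUopen hUopen hUne hUne
    have get : ∀ n : ℕ, n₀ ≤ n → ∃ a : ℕ,
        (9 : ℝ) * 2 ^ n < 10 * 6 ^ a ∧ (9 : ℝ) * 6 ^ a < 10 * 2 ^ n := by
      intro n hn
      obtain ⟨y, ⟨x, hxU, hxy⟩, hyU⟩ := hn₀ n hn
      have hyn : (0.9 : ℝ) < (x : ℕ → ℝ) n := by
        rw [← hxy] at hyU
        have hit := iterPlus x n 0
        simp only [hU, Set.mem_setOf_eq] at hyU
        rw [hit] at hyU
        simpa using hyU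
      have hx0 : (0.9 : ℝ) < (x : ℕ → ℝ) 0 := hxU
      have hb0 := F23_fst (x.2 0)
      have hbn := F23_fst (x.2 n)
      obtain ⟨a, ha⟩ := orbitPlus x.2 n
      exact ⟨a, bridge hx0 hb0.2 hyn hbn.2 ha⟩
    obtain ⟨a, h1, h2⟩ := get n₀ le_rfl
    obtain ⟨b, h3, h4⟩ := get (n₀ + 1) (Nat.le_succ _)
    exact keyArith h1 h2 h3 h4
  · intro h
    set U : Set (MahavierTwo F23) := {x | (0.9 : ℝ) < (x : ℤ → ℝ) 0} with hU
    have hUopen : IsOpen U :=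
      isOpen_lt continuous_const ((continuous_apply 0).comp continuous_subtype_val)
    have hmem : (fun n : ℤ => if 0 ≤ n then (2 : ℝ) ^ (-n) else (3 : ℝ) ^ n)
        ∈ MahavierTwo F23 := by
      intro n
      rcases le_or_gt 0 n with hn | hn
      · have hn1 : (0 : ℤ) ≤ n + 1 := by omega
        simp only [if_pos hn, if_pos hn1]
        refine Or.inr ⟨⟨by positivity, ?_⟩, ?_⟩
        · exact zpow_le_one_of_nonpos₀ (by norm_num) (by omega)
        · rw [neg_add, zpow_add₀ (by norm_num : (2:ℝ) ≠ 0)]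
          norm_num
          ring
      · rcases eq_or_lt_of_le (by omega : n ≤ -1) with hn1 | hn2
        · subst hn1
          norm_num
          refine Or.inl ⟨⟨by positivity, ?_⟩, ?_⟩ <;> norm_num
        · have hne : ¬ (0 : ℤ) ≤ n := by omega
          have hne1 : ¬ (0 : ℤ) ≤ n + 1 := by omega
          simp only [if_neg hne, if_neg hne1]
          refine Or.inl ⟨⟨by positivity, ?_⟩, ?_⟩
          · calc (3 : ℝ) ^ n ≤ 3 ^ (-1 : ℤ) := by
                  apply zpow_le_zpow_right₀ (by norm_num) (by omega)
              _ = 1 / 3 := by norm_num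
          · rw [zpow_add_one₀ (by norm_num : (3:ℝ) ≠ 0)]
            ring
    have hUne : U.Nonempty := ⟨⟨_, hmem⟩, by simp [hU]; norm_num⟩
    obtain ⟨n₀, hn₀⟩ := h U U hUopen hUopen hUne hUne
    have get : ∀ n : ℕ, n₀ ≤ n → ∃ a : ℕ,
        (9 : ℝ) * 2 ^ n < 10 * 6 ^ a ∧ (9 : ℝ) * 6 ^ a < 10 * 2 ^ n := by
      intro n hn
      obtain ⟨y, ⟨x, hxU, hxy⟩, hyU⟩ := hn₀ n hn
      have hyn : (0.9 : ℝ) < (x : ℤ → ℝ) (n : ℤ) := by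
        rw [← hxy] at hyU
        have hit := iterTwo x n 0
        simp only [hU, Set.mem_setOf_eq] at hyU
        rw [hit] at hyU
        simpa using hyU
      have hx0 : (0.9 : ℝ) < (x : ℤ → ℝ) 0 := hxU
      have hb0 := F23_fst (x.2 0)
      have hbn := F23_fst (x.2 (n : ℤ))
      obtain ⟨a, ha⟩ := orbitTwo x.2 n
      exact ⟨a, bridge hx0 hb0.2 hyn hbn.2 ha⟩
    obtain ⟨a, h1, h2⟩ := get n₀ le_rfl
    obtain ⟨b, h3, h4⟩ := get (n₀ + 1) (Nat.le_succ _)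
    exact keyArith h1 h2 h3 h4
end

section
/- Let X be a nonempty compact metric space and let F ⊆ X × X be a closed relation. If the two-sided Mahavier dynamical system (X_F, σ_F) is topologically transitive and there exists a positive integer M such that the diagonal Δ_X = {(x,x) : x ∈ X} is contained in F^n for all n ≥ M, then (X_F, σ_F) is topologically mixing. -/
open Set Filter Topology

lemma shiftTwo_cont {X : Type*} [TopologicalSpace X] (F : Set (X × X)) :
    Continuous (shiftTwo F) := by
  apply Continuous.subtype_mk
  exact continuous_pi fun n => (continuous_apply (n + 1)).comp continuous_subtype_val

lemma shiftTwo_iter {X : Type*} (F : Set (X × X)) (m : ℕ) (x : MahavierTwo F) (i : ℤ) :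
    (((shiftTwo F)^[m] x) : ℤ → X) i = (x : ℤ → X) (i + m) := by
  induction m generalizing x with
  | zero => simp
  | succ m ih =>
    rw [Function.iterate_succ_apply, ih]
    show (x : ℤ → X) (i + m + 1) = (x : ℤ → X) (i + (m + 1 : ℕ))
    congr 1
    push_cast
    ring

lemma relPow_path {X : Type*} (F : Set (X × X)) :
    ∀ j : ℕ, ∀ a b : X, (a, b) ∈ relPow F j →
    ∃ z : ℕ → X, z 0 = a ∧ z j = b ∧ ∀ t, t < j → (z t, z (t + 1)) ∈ F := by
  intro j
  induction j with
  | zero =>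
    intro a b h
    exact ⟨fun _ => a, rfl, h, fun t ht => absurd ht (Nat.not_lt_zero t)⟩
  | succ j ih =>
    intro a b h
    obtain ⟨c, h1, h2⟩ := h
    obtain ⟨z, hz0, hzj, hz⟩ := ih a c h1
    refine ⟨fun t => if t ≤ j then z t else b, by simp [hz0], by simp, ?_⟩
    intro t ht
    rcases Nat.lt_or_ge t j with h' | h'
    · simp only [if_pos (le_of_lt h'), if_pos (Nat.succ_le_of_lt h')]
      exact hz t h'
    · have htj : t = j := by omega
      subst htj
      simp only [if_pos (le_refl t), if_neg (by omega : ¬ t + 1 ≤ t), hzj]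
      exact h2

lemma insert_loop {X : Type*} (F : Set (X × X)) (x : MahavierTwo F) (p : ℤ) (j : ℕ)
    (hj : 1 ≤ j) (h : ((x : ℤ → X) p, (x : ℤ → X) p) ∈ relPow F j) :
    ∃ y : MahavierTwo F, (∀ i ≤ p, (y : ℤ → X) i = (x : ℤ → X) i) ∧
      (∀ i, p + j ≤ i → (y : ℤ → X) i = (x : ℤ → X) (i - j)) := by
  obtain ⟨z, hz0, hzj, hz⟩ := relPow_path F j _ _ h
  set g : ℤ → X := fun i =>
    if i < p then (x : ℤ → X) i
    else if i ≤ p + j then z (i - p).toNat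
    else (x : ℤ → X) (i - j) with hg
  have claim1 : ∀ i ≤ p, g i = (x : ℤ → X) i := by
    intro i hi
    rcases lt_or_eq_of_le hi with h' | h'
    · simp only [hg, if_pos h']
    · subst h'
      simp only [hg, if_neg (lt_irrefl i), if_pos (by omega : i ≤ i + (j : ℤ))]
      have : (i - i).toNat = 0 := by omega
      rw [this, hz0]
  have claim2 : ∀ i, p + (j : ℤ) ≤ i → g i = (x : ℤ → X) (i - j) := by
    intro i hi
    rcases lt_or_eq_of_le hi with h' | h'
    · simp only [hg, if_neg (by omega : ¬ i < p), if_neg (by omega : ¬ i ≤ p + (j : ℤ))]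
    · subst h'
      simp only [hg, if_neg (by omega : ¬ p + (j : ℤ) < p),
        if_pos (le_refl _)]
      have : (p + (j : ℤ) - p).toNat = j := by
        have h' : p + (j : ℤ) - p = (j : ℤ) := by ring
        rw [h']
        exact Int.toNat_natCast j
      rw [this, hzj, show p + (j : ℤ) - (j : ℤ) = p from by ring]
  have hgmem : g ∈ MahavierTwo F := by
    intro i
    rcases lt_trichotomy i p with h1 | h1 | h1
    · rw [claim1 i (le_of_lt h1), claim1 (i + 1) (by omega)]
      exact x.2 i
    · subst h1
      rw [claim1 i (le_refl i)]
      have : g (i + 1) = z 1 := by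
        simp only [hg, if_neg (by omega : ¬ i + 1 < i), if_pos (by omega : i + 1 ≤ i + (j : ℤ))]
        congr 1
        omega
      rw [this, ← hz0]
      exact hz 0 (by omega)
    · rcases lt_or_ge i (p + (j : ℤ)) with h2 | h2
      · have hgi : g i = z (i - p).toNat := by
          simp only [hg, if_neg (by omega : ¬ i < p), if_pos (by omega : i ≤ p + (j : ℤ))]
        have hgi1 : g (i + 1) = z ((i - p).toNat + 1) := by
          simp only [hg, if_neg (by omega : ¬ i + 1 < p),
            if_pos (by omega : i + 1 ≤ p + (j : ℤ))]
          congr 1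
          omega
        rw [hgi, hgi1]
        exact hz _ (by omega)
      · rw [claim2 i h2, claim2 (i + 1) (by omega)]
        have : (x : ℤ → X) (i + 1 - j) = (x : ℤ → X) (i - j + 1) := by congr 1; ring
        rw [this]
        exact x.2 (i - j)
  exact ⟨⟨g, hgmem⟩, claim1, claim2⟩

/-- If the two-sided Mahavier system of a closed relation `F` on a
nonempty compact metric space is topologically transitive and there is `M ≥ 1` with the
diagonal contained in `F^n` for all `n ≥ M`, then the system is topologically mixing. -/
theorem stmt13 {X : Type*} [MetricSpace X] [CompactSpace X] [Nonempty X]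
    (F : Set (X × X)) (hF : IsClosed F)
    (htrans : TopTransitive (shiftTwo F))
    (hdiag : ∃ M : ℕ, 0 < M ∧ ∀ n : ℕ, M ≤ n → ∀ x : X, (x, x) ∈ relPow F n) :
    TopMixing (shiftTwo F) := by
  obtain ⟨M, hM, hdiag⟩ := hdiag
  intro U V hU hV hUne hVne
  obtain ⟨u₀, hu₀⟩ := hUne
  obtain ⟨v₀, hv₀⟩ := hVne
  obtain ⟨OU, hOU, rfl⟩ := isOpen_induced_iff.mp hU
  obtain ⟨OV, hOV, rfl⟩ := isOpen_induced_iff.mp hV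
  obtain ⟨I, u, h1, h2⟩ := isOpen_pi_iff.mp hOU _ hu₀
  obtain ⟨I', u', h1', h2'⟩ := isOpen_pi_iff.mp hOV _ hv₀
  set K₁ : ℤ := ((I.sup fun i => i.toNat : ℕ) : ℤ) with hK₁
  set K₂ : ℤ := ((I'.sup fun i => (-i).toNat : ℕ) : ℤ) with hK₂
  have hK₁le : ∀ i ∈ I, i ≤ K₁ := by
    intro i hi
    have h : i.toNat ≤ I.sup (fun i => i.toNat) := Finset.le_sup hi
    omega
  have hK₂le : ∀ i ∈ I', -K₂ ≤ i := by
    intro i hi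
    have h : (-i).toNat ≤ I'.sup (fun i => (-i).toNat) :=
      Finset.le_sup (f := fun i : ℤ => (-i).toNat) hi
    omega
  have hK₁0 : 0 ≤ K₁ := by positivity
  have hK₂0 : 0 ≤ K₂ := by positivity
  set k₀ : ℕ := (K₁ + K₂).toNat with hk₀
  have hk₀eq : (k₀ : ℤ) = K₁ + K₂ := by omega
  -- shrunken basic open sets
  set U' : Set (MahavierTwo F) := Subtype.val ⁻¹' ((I : Set ℤ).pi u) with hU'
  set V' : Set (MahavierTwo F) := Subtype.val ⁻¹' ((I' : Set ℤ).pi u') with hV'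
  have hU'open : IsOpen U' :=
    (isOpen_set_pi I.finite_toSet fun i hi => (h1 i hi).1).preimage continuous_subtype_val
  have hV'open : IsOpen V' :=
    (isOpen_set_pi I'.finite_toSet fun i hi => (h1' i hi).1).preimage continuous_subtype_val
  have hu₀' : u₀ ∈ U' := fun i hi => (h1 i hi).2
  have hv₀' : v₀ ∈ V' := fun i hi => (h1' i hi).2
  -- pre-shifted copy of V'
  set W : Set (MahavierTwo F) := (shiftTwo F)^[k₀] ⁻¹' V' with hW
  have hWopen : IsOpen W := hV'open.preimage ((shiftTwo_cont F).iterate k₀)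
  -- W is nonempty: shift v₀ back by k₀
  have hWne : W.Nonempty := by
    have hv'mem : (fun i => (v₀ : ℤ → X) (i - k₀)) ∈ MahavierTwo F := by
      intro i
      have := v₀.2 (i - k₀)
      rwa [sub_add_eq_add_sub] at this
    refine ⟨⟨_, hv'mem⟩, ?_⟩
    have : (shiftTwo F)^[k₀] ⟨_, hv'mem⟩ = v₀ := by
      apply Subtype.ext
      funext i
      rw [shiftTwo_iter]
      show (v₀ : ℤ → X) (i + k₀ - k₀) = (v₀ : ℤ → X) i
      congr 1
      ring
    show (shiftTwo F)^[k₀] ⟨_, hv'mem⟩ ∈ V'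
    rw [this]
    exact hv₀'
  obtain ⟨n₁, w, ⟨x, hxU', rfl⟩, hxW⟩ := htrans U' W hU'open hWopen ⟨u₀, hu₀'⟩ hWne
  set n : ℕ := k₀ + n₁ with hn
  have hxV' : (shiftTwo F)^[n] x ∈ V' := by
    rw [hn, Function.iterate_add_apply]
    exact hxW
  refine ⟨n + M, fun m hm => ?_⟩
  set j : ℕ := m - n with hj
  have hmeq : m = n + j := by omega
  have hjM : M ≤ j := by omega
  have hj1 : 1 ≤ j := by omega
  obtain ⟨y, hy1, hy2⟩ := insert_loop F x K₁ j hj1 (hdiag j hjM _)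
  refine ⟨(shiftTwo F)^[m] y, ⟨y, ?_, rfl⟩, ?_⟩
  · -- y ∈ U
    apply h2
    intro i hi
    rw [hy1 i (hK₁le i hi)]
    exact hxU' i hi
  · -- (shiftTwo F)^[m] y ∈ V
    apply h2'
    intro i hi
    have hiK₂ := hK₂le i hi
    have hnk : (k₀ : ℤ) ≤ (n : ℤ) := by exact_mod_cast Nat.le_add_right k₀ n₁
    have hmz : (m : ℤ) = (n : ℤ) + (j : ℤ) := by exact_mod_cast hmeq
    show (((shiftTwo F)^[m] y) : ℤ → X) i ∈ u' i
    rw [shiftTwo_iter, hy2 (i + m) (by omega)]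
    have hcoord : i + (m : ℤ) - (j : ℤ) = i + (n : ℤ) := by omega
    rw [hcoord]
    have hv := hxV' i hi
    rwa [show (((shiftTwo F)^[n] x) : ℤ → X) i = (x : ℤ → X) (i + n) from shiftTwo_iter F n x i]
      at hv
end

section
/- Let X be a nonempty compact metric space, let F ⊆ X × X be a nonempty closed relation, and let G = F ∪ F^{-1}, where F^{-1} = { (y,x) : (x,y) ∈ F }. Then the periodic points of the shift σ_G are dense in the two-sided Mahavier product X_G: for every x ∈ X_G and every ε > 0 there exist z ∈ X_G and a positive integer n with σ_G^n(z) = z and D(z, x) < ε. -/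
open Set Filter Topology

/-- Triangle-wave index function with period `4*N`, equal to `n` on `[-N, N]`. -/
def triIdx (N n : ℤ) : ℤ :=
  if (n + N) % (4*N) ≤ 2*N then (n + N) % (4*N) - N else 3*N - (n + N) % (4*N)

lemma triIdx_eq_self (N n : ℤ) (hN : 1 ≤ N) (h1 : -N ≤ n) (h2 : n ≤ N) :
    triIdx N n = n := by
  have h : (n + N) % (4*N) = n + N := Int.emod_eq_of_lt (by omega) (by omega)
  simp only [triIdx, h]
  split_ifs <;> omega

lemma triIdx_period (N n : ℤ) : triIdx N (n + 4*N) = triIdx N n := by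
  have h : (n + 4*N + N) % (4*N) = (n + N) % (4*N) := by
    rw [show n + 4*N + N = (n+N) + 4*N*1 by ring, Int.add_mul_emod_self_left]
  simp only [triIdx, h]

lemma triIdx_step (N n : ℤ) (hN : 1 ≤ N) :
    triIdx N (n+1) = triIdx N n + 1 ∨ triIdx N n = triIdx N (n+1) + 1 := by
  have h4 : (0:ℤ) < 4*N := by omega
  set r := (n + N) % (4*N) with hr
  have hr0 : 0 ≤ r := Int.emod_nonneg _ (by omega)
  have hrP : r < 4*N := Int.emod_lt_of_pos _ h4
  have hqe := Int.mul_ediv_add_emod (n+N) (4*N)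
  have key : (n+1+N) % (4*N) = (r+1) % (4*N) := by
    rw [show n+1+N = (r+1) + (4*N) * ((n+N)/(4*N)) by rw [hr]; linarith,
      Int.add_mul_emod_self_left]
  by_cases hlast : r + 1 < 4*N
  · have key2 : (n+1+N) % (4*N) = r + 1 := by
      rw [key, Int.emod_eq_of_lt (by omega) hlast]
    simp only [triIdx, key2, ← hr]
    split_ifs <;> omega
  · have key2 : (n+1+N) % (4*N) = 0 := by
      rw [key, show r + 1 = 4*N by omega, Int.emod_self]
    simp only [triIdx, key2, ← hr]
    split_ifs <;> omega

lemma shiftTwo_iterate {X : Type*} (G : Set (X × X)) (k : ℕ) (z : MahavierTwo G) (n : ℤ) :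
    (((shiftTwo G)^[k] z : MahavierTwo G) : ℤ → X) n = (z : ℤ → X) (n + k) := by
  induction k generalizing z n with
  | zero => simp
  | succ k ih =>
    rw [Function.iterate_succ_apply, ih]
    show (z : ℤ → X) (n + k + 1) = (z : ℤ → X) (n + (k+1 : ℕ))
    congr 1
    push_cast
    ring

/-- For a nonempty closed relation `F` on a nonempty compact metric
space and `G = F ∪ F⁻¹`, the periodic points of the shift are dense in the two-sided
Mahavier product `X_G`. -/
theorem stmt14 {X : Type*} [MetricSpace X] [CompactSpace X] [Nonempty X]
    (F : Set (X × X)) (hF : IsClosed F) (hFne : F.Nonempty)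
    (G : Set (X × X)) (hG : G = F ∪ {p : X × X | (p.2, p.1) ∈ F}) :
    ∀ x : MahavierTwo G, ∀ ε : ℝ, 0 < ε →
      ∃ (z : MahavierTwo G) (n : ℕ), 0 < n ∧ (shiftTwo G)^[n] z = z ∧
        DTwo (z : ℤ → X) (x : ℤ → X) < ε := by
  intro x ε hε
  have hGsymm : ∀ a b : X, (a,b) ∈ G → (b,a) ∈ G := by
    intro a b hab
    rw [hG] at hab ⊢
    rcases hab with h | h
    · exact Or.inr h
    · exact Or.inl h
  -- a uniform bound on distances
  obtain ⟨C, hC⟩ : ∃ C : ℝ, ∀ a b : X, dist a b ≤ C := by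
    obtain ⟨C, hC⟩ := Metric.isBounded_iff.1 (isCompact_univ (X := X)).isBounded
    exact ⟨C, fun a b => hC (mem_univ a) (mem_univ b)⟩
  have hC0 : 0 ≤ C := le_trans dist_nonneg (hC (Classical.arbitrary X) (Classical.arbitrary X))
  -- choose N
  obtain ⟨M, hM⟩ := pow_unbounded_of_one_lt (C/ε) (by norm_num : (1:ℝ) < 2)
  set N : ℕ := M + 1 with hNdef
  have hNε : C / 2^(N+1) < ε := by
    rw [div_lt_iff₀ (by positivity)]
    have h2 : C / ε < 2^(N+1) :=
      lt_of_lt_of_le hM (pow_le_pow_right₀ one_le_two (by omega))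
    calc C = (C/ε) * ε := by field_simp
      _ < 2^(N+1) * ε := mul_lt_mul_of_pos_right h2 hε
      _ = ε * 2^(N+1) := by ring
  set Nz : ℤ := (N : ℤ) with hNz
  have hN1 : 1 ≤ Nz := by omega
  -- the candidate periodic sequence
  have hz : (fun n => (x : ℤ → X) (triIdx Nz n)) ∈ MahavierTwo G := by
    intro n
    show ((x : ℤ → X) (triIdx Nz n), (x : ℤ → X) (triIdx Nz (n+1))) ∈ G
    rcases triIdx_step Nz n hN1 with h | h
    · rw [h]
      exact x.2 (triIdx Nz n)
    · have h2 := x.2 (triIdx Nz (n+1))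
      rw [← h] at h2
      exact hGsymm _ _ h2
  refine ⟨⟨fun n => (x : ℤ → X) (triIdx Nz n), hz⟩, 4*N, by omega, ?_, ?_⟩
  · apply Subtype.ext
    funext n
    rw [shiftTwo_iterate]
    show (x : ℤ → X) (triIdx Nz (n + (4*N : ℕ))) = (x : ℤ → X) (triIdx Nz n)
    rw [show ((4*N : ℕ) : ℤ) = 4*Nz by push_cast [hNz, hNdef]; ring, triIdx_period]
  · refine lt_of_le_of_lt ?_ hNε
    apply Real.iSup_le _ (by positivity)
    intro n
    by_cases hn : n.natAbs ≤ N
    · have he : triIdx Nz n = n := triIdx_eq_self _ _ hN1 (by omega) (by omega)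
      simp only [he, dist_self, zero_div]
      positivity
    · have h1 : dist ((x : ℤ → X) (triIdx Nz n)) ((x : ℤ → X) n) ≤ C := hC _ _
      have h2 : (2:ℝ)^(N+1) ≤ 2^(n.natAbs) :=
        pow_le_pow_right₀ one_le_two (by omega)
      exact div_le_div₀ hC0 h1 (by positivity) h2
end
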